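/- arXiv:2510.19000 — 2 statements merged into one kernel-verified Lean document; each statement's English description precedes it below -/
import Mathlib

section
/- Let a < b be real numbers and, for each k ∈ ℕ ∪ {0}, let β_k : [a,b] → ℝ be a continuous function. Assume there exists a constant M > 0 such that sup_{t∈[a,b]} |β_k(t)| ≤ M^k for all k. Let α : [a,b] → ℝ be a nonnegative function with α ∈ L¹(a,b), and assume there exists a constant C > 0 such that β_k(t) ≤ C + ∫_a^t α(s) β_{k+1}(s) ds for all t ∈ [a,b] and all k ∈ ℕ ∪ {0}. Then β₀(t) ≤ C · exp(∫_a^t α(s) ds) for all t ∈ [a,b]. -/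
open MeasureTheory Set Filter Topology intervalIntegral

namespace IterativeAux

lemma pow_diff_ge {x y : ℝ} (hy : 0 ≤ y) (hxy : y ≤ x) (j : ℕ) :
    ((j : ℝ) + 1) * y ^ j * (x - y) ≤ x ^ (j + 1) - y ^ (j + 1) := by
  induction j with
  | zero => simp
  | succ j ih =>
    have hx : 0 ≤ x := hy.trans hxy
    have h1 : (((j : ℝ) + 1) * y ^ j * (x - y)) * x ≤ (x ^ (j + 1) - y ^ (j + 1)) * x :=
      mul_le_mul_of_nonneg_right ih hx
    have h2 : y ^ (j + 1) ≤ x ^ (j + 1) := pow_le_pow_left₀ hy hxy _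
    have h3 : 0 ≤ y ^ j := pow_nonneg hy j
    have h4 : 0 ≤ x - y := sub_nonneg.2 hxy
    have h5 : 0 ≤ ((j : ℝ) + 1) * y ^ j * (x - y) * (x - y) := by positivity
    push_cast
    rw [pow_succ x (j + 1), pow_succ y (j + 1), pow_succ y j] at *
    nlinarith [h1, h5]

variable {a b : ℝ} {α : ℝ → ℝ}

lemma intInt (hαint : IntegrableOn α (Set.Ioc a b) volume) {t₁ t₂ : ℝ}
    (h1 : a ≤ t₁) (h12 : t₁ ≤ t₂) (h2 : t₂ ≤ b) :
    IntervalIntegrable α volume t₁ t₂ := by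
  rw [intervalIntegrable_iff_integrableOn_Ioc_of_le h12]
  exact hαint.mono_set (Set.Ioc_subset_Ioc h1 h2)

lemma prodInt (hαint : IntegrableOn α (Set.Ioc a b) volume) {g : ℝ → ℝ}
    (hg : ContinuousOn g (Set.Icc a b)) {t₁ t₂ : ℝ}
    (h1 : a ≤ t₁) (h12 : t₁ ≤ t₂) (h2 : t₂ ≤ b) :
    IntervalIntegrable (fun s => α s * g s) volume t₁ t₂ := by
  rw [intervalIntegrable_iff_integrableOn_Ioc_of_le h12]
  have hsub : Set.Ioc t₁ t₂ ⊆ Set.Icc a b := fun x hx =>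
    ⟨h1.trans hx.1.le, hx.2.trans h2⟩
  obtain ⟨Cg, hCg⟩ := (isCompact_Icc).exists_bound_of_continuousOn hg
  have hαi : IntegrableOn α (Set.Ioc t₁ t₂) volume :=
    hαint.mono_set (Set.Ioc_subset_Ioc h1 h2)
  have hgm : AEStronglyMeasurable g (volume.restrict (Set.Ioc t₁ t₂)) :=
    (hg.mono hsub).aestronglyMeasurable measurableSet_Ioc
  have hbd : ∀ᵐ x ∂(volume.restrict (Set.Ioc t₁ t₂)), ‖g x‖ ≤ Cg :=
    (ae_restrict_iff' measurableSet_Ioc).2 (Eventually.of_forall fun x hx => hCg x (hsub hx))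
  have := Integrable.bdd_mul (c := Cg) hαi hgm hbd
  exact this.congr (Eventually.of_forall fun x => mul_comm (g x) (α x))

lemma contPrim (hab : a ≤ b) {f : ℝ → ℝ} (hf : IntegrableOn f (Set.Ioc a b) volume) :
    ContinuousOn (fun t => ∫ s in a..t, f s) (Set.Icc a b) := by
  have h1 : IntegrableOn f (Set.uIcc a b) volume := by
    rw [uIcc_of_le hab, integrableOn_Icc_iff_integrableOn_Ioc]
    exact hf
  simpa [uIcc_of_le hab] using continuousOn_primitive_interval h1

lemma A_mono (hαint : IntegrableOn α (Set.Ioc a b) volume)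
    (hα0 : ∀ s ∈ Set.Icc a b, 0 ≤ α s) {t₁ t₂ : ℝ}
    (h1 : a ≤ t₁) (h12 : t₁ ≤ t₂) (h2 : t₂ ≤ b) :
    (∫ s in a..t₁, α s) ≤ ∫ s in a..t₂, α s := by
  have hadd : (∫ s in a..t₁, α s) + ∫ s in t₁..t₂, α s = ∫ s in a..t₂, α s :=
    integral_add_adjacent_intervals (intInt hαint le_rfl h1 (h12.trans h2))
      (intInt hαint h1 h12 h2)
  have hnn : 0 ≤ ∫ s in t₁..t₂, α s :=
    intervalIntegral.integral_nonneg h12 fun s hs => hα0 s ⟨h1.trans hs.1, hs.2.trans h2⟩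
  linarith

lemma A_add (hαint : IntegrableOn α (Set.Ioc a b) volume) {t₁ t₂ : ℝ}
    (h1 : a ≤ t₁) (h12 : t₁ ≤ t₂) (h2 : t₂ ≤ b) :
    (∫ s in t₁..t₂, α s) = (∫ s in a..t₂, α s) - ∫ s in a..t₁, α s := by
  have hadd : (∫ s in a..t₁, α s) + ∫ s in t₁..t₂, α s = ∫ s in a..t₂, α s :=
    integral_add_adjacent_intervals (intInt hαint le_rfl h1 (h12.trans h2))
      (intInt hαint h1 h12 h2)
  linarith

/-- The key calculus inequality: `∫_a^t α A^j ≤ A(t)^(j+1)/(j+1)` where `A t = ∫_a^t α`. -/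
lemma key_ineq (hab : a ≤ b) (hα0 : ∀ s ∈ Set.Icc a b, 0 ≤ α s)
    (hαint : IntegrableOn α (Set.Ioc a b) volume) (j : ℕ) :
    ∀ t ∈ Set.Icc a b,
      (∫ s in a..t, α s * (∫ u in a..s, α u) ^ j)
        ≤ (∫ s in a..t, α s) ^ (j + 1) / ((j : ℝ) + 1) := by
  set A : ℝ → ℝ := fun t => ∫ s in a..t, α s with hAdef
  have hAcont : ContinuousOn A (Set.Icc a b) := contPrim hab hαint
  have hA0 : ∀ t ∈ Set.Icc a b, 0 ≤ A t := fun t ht =>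
    intervalIntegral.integral_nonneg ht.1 fun s hs => hα0 s ⟨hs.1, hs.2.trans ht.2⟩
  have hprodint : IntegrableOn (fun s => α s * A s ^ j) (Set.Ioc a b) volume := by
    have := prodInt (g := fun s => A s ^ j) hαint (hAcont.pow j) le_rfl hab le_rfl
    rwa [intervalIntegrable_iff_integrableOn_Ioc_of_le hab] at this
  have hIcont : ContinuousOn (fun t => ∫ s in a..t, α s * A s ^ j) (Set.Icc a b) :=
    contPrim hab hprodint
  have Jpos : (0 : ℝ) < (j : ℝ) + 1 := by positivity
  suffices H : ∀ ε > (0 : ℝ), ∀ t ∈ Set.Icc a b,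
      (∫ s in a..t, α s * A s ^ j) ≤ A t ^ (j + 1) / ((j : ℝ) + 1) + ε * (A t + (t - a)) by
    intro t ht
    by_contra hlt
    push_neg at hlt
    set D := (∫ s in a..t, α s * A s ^ j) - A t ^ (j + 1) / ((j : ℝ) + 1) with hD
    have hDpos : 0 < D := by simp only [hD]; linarith
    have hK : 0 ≤ A t + (t - a) := add_nonneg (hA0 t ht) (sub_nonneg.2 ht.1)
    have hεpos : 0 < D / (A t + (t - a) + 1) := by positivity
    have := H _ hεpos t ht
    have hmul : D / (A t + (t - a) + 1) * (A t + (t - a)) < D := by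
      rw [div_mul_eq_mul_div, div_lt_iff₀ (by positivity)]
      nlinarith
    simp only [hD] at this hmul
    linarith
  intro ε hε
  set s : Set ℝ := {t | (∫ s in a..t, α s * A s ^ j)
      ≤ A t ^ (j + 1) / ((j : ℝ) + 1) + ε * (A t + (t - a))} with hs
  have hsub : Set.Icc a b ⊆ s := by
    apply IsClosed.Icc_subset_of_forall_exists_gt
    · have hcont2 : ContinuousOn
          (fun t => ((∫ s in a..t, α s * A s ^ j),
            A t ^ (j + 1) / ((j : ℝ) + 1) + ε * (A t + (t - a)))) (Set.Icc a b) := by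
        apply hIcont.prodMk
        exact (((hAcont.pow (j + 1)).div_const _).add
          ((continuousOn_const.mul (hAcont.add ((continuousOn_id.sub continuousOn_const))))))
      have := hcont2.preimage_isClosed_of_isClosed isClosed_Icc
        (isClosed_le continuous_fst continuous_snd)
      rw [Set.inter_comm]; exact this
    · have hAa : A a = 0 := integral_same
      simp only [hs, Set.mem_setOf_eq, integral_same, hAa, sub_self, add_zero, mul_zero]
      rw [zero_pow (Nat.succ_ne_zero j)]
      simp
    · rintro x ⟨hxs, hxa, hxb⟩ v hv
      have hxab : x ∈ Set.Icc a b := ⟨hxa, hxb.le⟩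
      -- continuity of A^j at x within Icc a b
      have hcw : ContinuousWithinAt (fun u => A u ^ j) (Set.Icc a b) x :=
        (hAcont.pow j) x hxab
      have hev : ∀ᶠ u in 𝓝[Set.Icc a b] x, A u ^ j < A x ^ j + ε :=
        hcw.eventually_lt_const (lt_add_of_pos_right _ hε)
      rw [eventually_nhdsWithin_iff, Metric.eventually_nhds_iff] at hev
      obtain ⟨δ, hδ, hδev⟩ := hev
      set u := min (x + δ / 2) (min v b) with hu
      have hxu : x < u := lt_min (by linarith) (lt_min hv hxb)
      have hub : u ≤ b := (min_le_right _ _).trans (min_le_right _ _)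
      have huv : u ≤ v := (min_le_right _ _).trans (min_le_left _ _)
      have hau : a ≤ u := hxa.trans hxu.le
      have huab : u ∈ Set.Icc a b := ⟨hau, hub⟩
      have hudist : dist u x < δ := by
        rw [Real.dist_eq, abs_of_nonneg (by linarith)]
        have : u ≤ x + δ / 2 := min_le_left _ _
        linarith
      have hAuj : A u ^ j < A x ^ j + ε := hδev hudist huab
      refine ⟨u, ?_, hxu, huv⟩
      -- now prove u ∈ s
      have hAxu : A x ≤ A u := A_mono hαint hα0 hxa hxu.le hub
      have hΔ : (0 : ℝ) ≤ A u - A x := sub_nonneg.2 hAxu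
      have hsplit : (∫ s in a..u, α s * A s ^ j)
          = (∫ s in a..x, α s * A s ^ j) + ∫ s in x..u, α s * A s ^ j := by
        rw [integral_add_adjacent_intervals
          (prodInt (g := fun s => A s ^ j) hαint (hAcont.pow j) le_rfl hxa hxb.le)
          (prodInt (g := fun s => A s ^ j) hαint (hAcont.pow j) hxa hxu.le hub)]
      have hbound : (∫ s in x..u, α s * A s ^ j) ≤ A u ^ j * (A u - A x) := by
        have hpt : ∀ s' ∈ Set.Icc x u, α s' * A s' ^ j ≤ α s' * A u ^ j := by
          intro s' hs'
          have hs'ab : s' ∈ Set.Icc a b := ⟨hxa.trans hs'.1, hs'.2.trans hub⟩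
          refine mul_le_mul_of_nonneg_left ?_ (hα0 s' hs'ab)
          exact pow_le_pow_left₀ (hA0 s' hs'ab)
            (A_mono hαint hα0 (hxa.trans hs'.1) hs'.2 hub) j
        calc (∫ s in x..u, α s * A s ^ j)
            ≤ ∫ s in x..u, α s * A u ^ j :=
              intervalIntegral.integral_mono_on hxu.le
                (prodInt hαint (hAcont.pow j) hxa hxu.le hub)
                ((intInt hαint hxa hxu.le hub).mul_const _) hpt
          _ = (∫ s in x..u, α s) * A u ^ j := intervalIntegral.integral_mul_const _ _
          _ = (A u - A x) * A u ^ j := by rw [A_add hαint hxa hxu.le hub]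
          _ = A u ^ j * (A u - A x) := mul_comm _ _
      have hpow : A x ^ j * (A u - A x) ≤ A u ^ (j + 1) / ((j : ℝ) + 1)
          - A x ^ (j + 1) / ((j : ℝ) + 1) := by
        have := pow_diff_ge (hA0 x hxab) hAxu j
        rw [div_sub_div_same, le_div_iff₀ Jpos]
        linarith
      have hmul : A u ^ j * (A u - A x) ≤ (A x ^ j + ε) * (A u - A x) :=
        mul_le_mul_of_nonneg_right hAuj.le hΔ
      have hxmem : (∫ s in a..x, α s * A s ^ j)
          ≤ A x ^ (j + 1) / ((j : ℝ) + 1) + ε * (A x + (x - a)) := hxs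
      simp only [hs, Set.mem_setOf_eq]
      rw [hsplit]
      nlinarith [hΔ, hε.le, hxu.le]
  exact fun t ht => hsub ht

end IterativeAux

open IterativeAux

/-- The iterative lemma (Lemma 6.1): if continuous functions `β_k` on `[a,b]` satisfy
`|β_k| ≤ M^k` and the iterative inequality `β_k(t) ≤ C + ∫_a^t α(s) β_{k+1}(s) ds`
with a nonnegative integrable weight `α`, then `β₀(t) ≤ C exp(∫_a^t α(s) ds)`. -/
theorem iterative_lemma (a b : ℝ) (hab : a < b) (β : ℕ → ℝ → ℝ)
    (hβcont : ∀ k : ℕ, ContinuousOn (β k) (Set.Icc a b))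
    (M : ℝ) (hM : 0 < M)
    (hβbd : ∀ k : ℕ, ∀ t ∈ Set.Icc a b, |β k t| ≤ M ^ k)
    (α : ℝ → ℝ) (hα0 : ∀ s ∈ Set.Icc a b, 0 ≤ α s)
    (hαint : IntegrableOn α (Set.Ioc a b) volume)
    (C : ℝ) (hC : 0 < C)
    (hiter : ∀ k : ℕ, ∀ t ∈ Set.Icc a b, β k t ≤ C + ∫ s in a..t, α s * β (k + 1) s) :
    ∀ t ∈ Set.Icc a b, β 0 t ≤ C * Real.exp (∫ s in a..t, α s) := by
  have hab' : a ≤ b := hab.le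
  set A : ℝ → ℝ := fun t => ∫ s in a..t, α s with hAdef
  have hAcont : ContinuousOn A (Set.Icc a b) := contPrim hab' hαint
  have hA0 : ∀ t ∈ Set.Icc a b, 0 ≤ A t := fun t ht =>
    intervalIntegral.integral_nonneg ht.1 fun s hs => hα0 s ⟨hs.1, hs.2.trans ht.2⟩
  have key : ∀ n k : ℕ, ∀ t ∈ Set.Icc a b,
      β k t ≤ C * ∑ j ∈ Finset.range n, A t ^ j / (Nat.factorial j : ℝ)
        + M ^ (n + k) * A t ^ n / (Nat.factorial n : ℝ) := by
    intro n
    induction n with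
    | zero =>
      intro k t ht
      simpa using (le_abs_self _).trans (hβbd k t ht)
    | succ n ih =>
      intro k t ht
      have hat : a ≤ t := ht.1
      have htb : t ≤ b := ht.2
      have hprod_int : ∀ g : ℝ → ℝ, ContinuousOn g (Set.Icc a b) →
          IntervalIntegrable (fun s => α s * g s) volume a t := fun g hg =>
        prodInt hαint hg le_rfl hat htb
      have hβint : IntervalIntegrable (fun s => α s * β (k + 1) s) volume a t :=
        hprod_int _ (hβcont (k + 1))
      have hRHScont : ContinuousOn
          (fun s => C * ∑ j ∈ Finset.range n, A s ^ j / (Nat.factorial j : ℝ)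
            + M ^ (n + (k + 1)) * A s ^ n / (Nat.factorial n : ℝ)) (Set.Icc a b) := by
        apply ContinuousOn.add
        · apply continuousOn_const.mul
          apply continuousOn_finset_sum
          intro j _
          exact (hAcont.pow j).div_const _
        · exact (continuousOn_const.mul (hAcont.pow n)).div_const _
      have hRHSint := hprod_int _ hRHScont
      have step1 : β k t ≤ C + ∫ s in a..t,
          α s * (C * ∑ j ∈ Finset.range n, A s ^ j / (Nat.factorial j : ℝ)
            + M ^ (n + (k + 1)) * A s ^ n / (Nat.factorial n : ℝ)) := by
        refine (hiter k t ht).trans (add_le_add (le_refl C) ?_)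
        refine intervalIntegral.integral_mono_on hat hβint hRHSint ?_
        intro s hs
        have hs' : s ∈ Set.Icc a b := ⟨hs.1, hs.2.trans htb⟩
        exact mul_le_mul_of_nonneg_left (ih (k + 1) s hs') (hα0 s hs')
      have hint_j : ∀ j : ℕ, IntervalIntegrable (fun s => α s * A s ^ j) volume a t :=
        fun j => hprod_int _ (hAcont.pow j)
      have expand : (∫ s in a..t,
          α s * (C * ∑ j ∈ Finset.range n, A s ^ j / (Nat.factorial j : ℝ)
            + M ^ (n + (k + 1)) * A s ^ n / (Nat.factorial n : ℝ)))
          = (∑ j ∈ Finset.range n,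
              (C / (Nat.factorial j : ℝ)) * ∫ s in a..t, α s * A s ^ j)
            + (M ^ (n + (k + 1)) / (Nat.factorial n : ℝ)) * ∫ s in a..t, α s * A s ^ n := by
        have hpt : ∀ s : ℝ,
            α s * (C * ∑ j ∈ Finset.range n, A s ^ j / (Nat.factorial j : ℝ)
              + M ^ (n + (k + 1)) * A s ^ n / (Nat.factorial n : ℝ))
            = (∑ j ∈ Finset.range n, (C / (Nat.factorial j : ℝ)) * (α s * A s ^ j))
              + (M ^ (n + (k + 1)) / (Nat.factorial n : ℝ)) * (α s * A s ^ n) := by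
          intro s
          rw [mul_add, Finset.mul_sum, Finset.mul_sum]
          congr 1
          · exact Finset.sum_congr rfl fun j _ => by ring
          · ring
        simp_rw [hpt]
        have hsum_int : IntervalIntegrable
            (fun s => ∑ j ∈ Finset.range n, C / (Nat.factorial j : ℝ) * (α s * A s ^ j))
            volume a t := by
          have := IntervalIntegrable.sum (μ := volume) (a := a) (b := t) (Finset.range n)
            (f := fun j => fun s => C / (Nat.factorial j : ℝ) * (α s * A s ^ j))
            (fun j _ => (hint_j j).const_mul _)
          rwa [Finset.sum_fn] at this
        rw [intervalIntegral.integral_add hsum_int ((hint_j n).const_mul _),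
          intervalIntegral.integral_finset_sum fun j _ => (hint_j j).const_mul _]
        simp_rw [intervalIntegral.integral_const_mul]
      have hbound_j : ∀ j : ℕ, (∫ s in a..t, α s * A s ^ j)
          ≤ A t ^ (j + 1) / ((j : ℝ) + 1) :=
        fun j => key_ineq hab' hα0 hαint j t ht
      have hsum_le : (∑ j ∈ Finset.range n,
            (C / (Nat.factorial j : ℝ)) * ∫ s in a..t, α s * A s ^ j)
          ≤ ∑ j ∈ Finset.range n,
            (C / (Nat.factorial j : ℝ)) * (A t ^ (j + 1) / ((j : ℝ) + 1)) := by
        refine Finset.sum_le_sum fun j _ => ?_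
        exact mul_le_mul_of_nonneg_left (hbound_j j)
          (div_nonneg hC.le (Nat.cast_nonneg _))
      have hlast_le : (M ^ (n + (k + 1)) / (Nat.factorial n : ℝ)) * ∫ s in a..t, α s * A s ^ n
          ≤ (M ^ (n + (k + 1)) / (Nat.factorial n : ℝ)) * (A t ^ (n + 1) / ((n : ℝ) + 1)) :=
        mul_le_mul_of_nonneg_left (hbound_j n)
          (div_nonneg (pow_nonneg hM.le _) (Nat.cast_nonneg _))
      have hfact : ∀ j : ℕ, (C / (Nat.factorial j : ℝ)) * (A t ^ (j + 1) / ((j : ℝ) + 1))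
          = C * (A t ^ (j + 1) / (Nat.factorial (j + 1) : ℝ)) := by
        intro j
        have h1 : (Nat.factorial (j + 1) : ℝ) = ((j : ℝ) + 1) * (Nat.factorial j : ℝ) := by
          rw [Nat.factorial_succ]; push_cast; ring
        have h2 : (Nat.factorial j : ℝ) ≠ 0 := Nat.cast_ne_zero.2 (Nat.factorial_ne_zero j)
        have h3 : ((j : ℝ) + 1) ≠ 0 := by positivity
        rw [h1]
        field_simp
        try ring
        try simp
      have hCsum : C + ∑ j ∈ Finset.range n,
            (C / (Nat.factorial j : ℝ)) * (A t ^ (j + 1) / ((j : ℝ) + 1))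
          = C * ∑ j ∈ Finset.range (n + 1), A t ^ j / (Nat.factorial j : ℝ) := by
        rw [Finset.sum_range_succ', mul_add, Finset.mul_sum]
        simp only [hfact, pow_zero, Nat.factorial_zero, Nat.cast_one]
        ring
      have hMlast : (M ^ (n + (k + 1)) / (Nat.factorial n : ℝ)) * (A t ^ (n + 1) / ((n : ℝ) + 1))
          = M ^ ((n + 1) + k) * A t ^ (n + 1) / (Nat.factorial (n + 1) : ℝ) := by
        have h1 : (Nat.factorial (n + 1) : ℝ) = ((n : ℝ) + 1) * (Nat.factorial n : ℝ) := by
          rw [Nat.factorial_succ]; push_cast; ring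
        have h2 : (Nat.factorial n : ℝ) ≠ 0 := Nat.cast_ne_zero.2 (Nat.factorial_ne_zero n)
        have h3 : ((n : ℝ) + 1) ≠ 0 := by positivity
        have h4 : n + (k + 1) = (n + 1) + k := by ring
        rw [h4, h1]
        field_simp
        try ring
        try simp
      calc β k t ≤ C + ∫ s in a..t,
            α s * (C * ∑ j ∈ Finset.range n, A s ^ j / (Nat.factorial j : ℝ)
              + M ^ (n + (k + 1)) * A s ^ n / (Nat.factorial n : ℝ)) := step1
        _ = C + ((∑ j ∈ Finset.range n,
              (C / (Nat.factorial j : ℝ)) * ∫ s in a..t, α s * A s ^ j)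
            + (M ^ (n + (k + 1)) / (Nat.factorial n : ℝ)) * ∫ s in a..t, α s * A s ^ n) := by
            rw [expand]
        _ ≤ C + ((∑ j ∈ Finset.range n,
              (C / (Nat.factorial j : ℝ)) * (A t ^ (j + 1) / ((j : ℝ) + 1)))
            + (M ^ (n + (k + 1)) / (Nat.factorial n : ℝ)) * (A t ^ (n + 1) / ((n : ℝ) + 1))) := by
            linarith [hsum_le, hlast_le]
        _ = C * ∑ j ∈ Finset.range (n + 1), A t ^ j / (Nat.factorial j : ℝ)
            + M ^ ((n + 1) + k) * A t ^ (n + 1) / (Nat.factorial (n + 1) : ℝ) := by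
            rw [← hMlast, ← hCsum]; ring
  intro t ht
  have hA0t : 0 ≤ A t := hA0 t ht
  have hseq : ∀ n : ℕ, β 0 t - C * Real.exp (A t) ≤ (M * A t) ^ n / (Nat.factorial n : ℝ) := by
    intro n
    have h1 := key n 0 t ht
    have h2 : (∑ j ∈ Finset.range n, A t ^ j / (Nat.factorial j : ℝ)) ≤ Real.exp (A t) :=
      Real.sum_le_exp_of_nonneg hA0t n
    have h3 : C * ∑ j ∈ Finset.range n, A t ^ j / (Nat.factorial j : ℝ)
        ≤ C * Real.exp (A t) := mul_le_mul_of_nonneg_left h2 hC.le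
    have h4 : M ^ (n + 0) * A t ^ n / (Nat.factorial n : ℝ)
        = (M * A t) ^ n / (Nat.factorial n : ℝ) := by rw [add_zero, mul_pow]
    linarith [h4 ▸ h1]
  have hlim : Tendsto (fun n : ℕ => (M * A t) ^ n / (Nat.factorial n : ℝ)) atTop (nhds 0) :=
    FloorSemiring.tendsto_pow_div_factorial_atTop (M * A t)
  have hfinal : β 0 t - C * Real.exp (A t) ≤ 0 := ge_of_tendsto' hlim hseq
  linarith
end

section
/- Let α > -2 and let H : ℝ³ × ℝ → ℝ³ be a function. Define B(x,t) = (-t)^{-α/(α+2)} H( x (-t)^{-1/(α+2)}, -log(-t) ) for t < 0. Let ε > 0 and suppose there exist y₀ > 1 and c₀ > 0 such that sup_{s∈ℝ} |H(y,s)| ≤ ε |y|² for all |y| ≥ y₀, and sup_{s∈ℝ} |H(y,s)| ≤ c₀ (1+|y|)² for all y ∈ ℝ³. Then there exists a₁ ∈ (-1,0) such that sup_{x∈ℝ³} (1+|x|)^{-2} |B(x,t)| ≤ ε (-t)^{-1} for all t ∈ [a₁, 0). -/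
noncomputable section

abbrev E3 : Type := EuclideanSpace ℝ (Fin 3)

/-- Quantitative weighted bound on the self-similar ansatz: if
`sup_s |H(y,s)| ≤ ε|y|²` for `|y| ≥ y₀` and `sup_s |H(y,s)| ≤ c₀(1+|y|)²` everywhere,
then for `t` close enough to `0⁻`, `(1+|x|)^{-2}|B(x,t)| ≤ ε(-t)^{-1}`. -/
theorem ansatz_weighted_bound (α : ℝ) (hα : -2 < α) (H : E3 → ℝ → E3)
    (B : E3 → ℝ → E3)
    (hB : ∀ (x : E3) (t : ℝ), t < 0 →
      B x t = ((-t) ^ (-(α / (α + 2)))) •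
        H (((-t) ^ (-(α + 2)⁻¹)) • x) (-Real.log (-t)))
    (ε : ℝ) (hε : 0 < ε) (y₀ : ℝ) (hy₀ : 1 < y₀) (c₀ : ℝ) (hc₀ : 0 < c₀)
    (h1 : ∀ y : E3, y₀ ≤ ‖y‖ → ∀ s : ℝ, ‖H y s‖ ≤ ε * ‖y‖ ^ 2)
    (h2 : ∀ (y : E3) (s : ℝ), ‖H y s‖ ≤ c₀ * (1 + ‖y‖) ^ 2) :
    ∃ a₁ : ℝ, -1 < a₁ ∧ a₁ < 0 ∧ ∀ t : ℝ, a₁ ≤ t → t < 0 → ∀ x : E3,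
      ((1 + ‖x‖) ^ 2)⁻¹ * ‖B x t‖ ≤ ε * (-t)⁻¹ := by
  have h2pos : (0:ℝ) < α + 2 := by linarith
  set K : ℝ := max 1 (c₀ * (1 + y₀) ^ 2 / ε) with hKdef
  have hK1 : (1:ℝ) ≤ K := le_max_left _ _
  have hKpos : (0:ℝ) < K := lt_of_lt_of_le one_pos hK1
  set δ : ℝ := min (1/2) (K ^ (-(α + 2) / 2)) with hδdef
  have hδpos : 0 < δ := lt_min (by norm_num) (Real.rpow_pos_of_pos hKpos _)
  have hδlt : δ < 1 := lt_of_le_of_lt (min_le_left _ _) (by norm_num)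
  refine ⟨-δ, by linarith, by linarith, ?_⟩
  intro t ht ht0 x
  have hT : 0 < -t := by linarith
  have hTδ : -t ≤ δ := by linarith
  set lam : ℝ := (-t) ^ (-(α + 2)⁻¹) with hlam
  have hlampos : 0 < lam := Real.rpow_pos_of_pos hT _
  set mu : ℝ := (-t) ^ (-(α / (α + 2))) with hmu
  have hmupos : 0 < mu := Real.rpow_pos_of_pos hT _
  have hnormy : ‖lam • x‖ = lam * ‖x‖ := by
    rw [norm_smul, Real.norm_of_nonneg hlampos.le]
  have hmul : mu * lam ^ 2 = (-t)⁻¹ := by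
    rw [hlam, hmu, ← Real.rpow_natCast ((-t) ^ (-(α + 2)⁻¹)) 2,
      ← Real.rpow_mul hT.le, ← Real.rpow_add hT,
      show -(α / (α + 2)) + -(α + 2)⁻¹ * ((2:ℕ):ℝ) = -1 by
        push_cast; field_simp; ring]
    exact Real.rpow_neg_one _
  have hlam2 : c₀ * (1 + y₀) ^ 2 / ε ≤ lam ^ 2 := by
    have hKle : c₀ * (1 + y₀) ^ 2 / ε ≤ K := le_max_right _ _
    refine hKle.trans ?_
    have hl2 : lam ^ 2 = (-t) ^ (-(2 / (α + 2))) := by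
      rw [hlam, ← Real.rpow_natCast _ 2, ← Real.rpow_mul hT.le]
      congr 1; push_cast; field_simp
    rw [hl2]
    have hTK : -t ≤ K ^ (-(α + 2) / 2) := hTδ.trans (min_le_right _ _)
    have hKeq : K = (K ^ (-(α + 2) / 2)) ^ (-(2 / (α + 2))) := by
      rw [← Real.rpow_mul hKpos.le,
        show (-(α + 2) / 2) * (-(2 / (α + 2))) = 1 by field_simp,
        Real.rpow_one]
    rw [hKeq]
    exact Real.rpow_le_rpow_of_nonpos hT hTK
      (neg_nonpos.mpr (by positivity : (0:ℝ) ≤ 2 / (α + 2)))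
  have hx1 : (0:ℝ) < (1 + ‖x‖) ^ 2 := by positivity
  have key : ‖B x t‖ ≤ ε * (-t)⁻¹ * (1 + ‖x‖) ^ 2 := by
    rw [hB x t ht0, norm_smul, Real.norm_of_nonneg hmupos.le]
    rcases le_or_gt y₀ (lam * ‖x‖) with hcase | hcase
    · have hH := h1 (lam • x) (by rw [hnormy]; exact hcase) (-Real.log (-t))
      rw [hnormy] at hH
      calc mu * ‖H (lam • x) (-Real.log (-t))‖
          ≤ mu * (ε * (lam * ‖x‖) ^ 2) := by
            exact mul_le_mul_of_nonneg_left hH hmupos.le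
        _ = ε * (mu * lam ^ 2) * ‖x‖ ^ 2 := by ring
        _ = ε * (-t)⁻¹ * ‖x‖ ^ 2 := by rw [hmul]
        _ ≤ ε * (-t)⁻¹ * (1 + ‖x‖) ^ 2 := by
            have hxn : (0:ℝ) ≤ ‖x‖ := norm_nonneg _
            have : ‖x‖ ^ 2 ≤ (1 + ‖x‖) ^ 2 := by nlinarith
            have hpos : 0 ≤ ε * (-t)⁻¹ := by positivity
            exact mul_le_mul_of_nonneg_left this hpos
    · have hH := h2 (lam • x) (-Real.log (-t))
      rw [hnormy] at hH
      have hH2 : ‖H (lam • x) (-Real.log (-t))‖ ≤ c₀ * (1 + y₀) ^ 2 := by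
        refine hH.trans ?_
        have : 1 + lam * ‖x‖ ≤ 1 + y₀ := by linarith
        have h0 : (0:ℝ) ≤ 1 + lam * ‖x‖ := by positivity
        exact mul_le_mul_of_nonneg_left (by nlinarith) hc₀.le
      have hεlam : c₀ * (1 + y₀) ^ 2 ≤ ε * lam ^ 2 := by
        rw [div_le_iff₀ hε] at hlam2
        linarith [hlam2]
      calc mu * ‖H (lam • x) (-Real.log (-t))‖
          ≤ mu * (ε * lam ^ 2) :=
            mul_le_mul_of_nonneg_left (hH2.trans hεlam) hmupos.le
        _ = ε * (mu * lam ^ 2) := by ring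
        _ = ε * (-t)⁻¹ := by rw [hmul]
        _ ≤ ε * (-t)⁻¹ * (1 + ‖x‖) ^ 2 := by
            refine le_mul_of_one_le_right (by positivity) ?_
            nlinarith [norm_nonneg x]
  calc ((1 + ‖x‖) ^ 2)⁻¹ * ‖B x t‖
      ≤ ((1 + ‖x‖) ^ 2)⁻¹ * (ε * (-t)⁻¹ * (1 + ‖x‖) ^ 2) :=
        mul_le_mul_of_nonneg_left key (inv_nonneg.mpr hx1.le)
    _ = ε * (-t)⁻¹ := by
        field_simp
end
end
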